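/- arXiv:0705.4573 — 2 statements merged into one kernel-verified Lean document; each statement's English description precedes it below -/
import Mathlib

section
/- Let μ be a probability measure on F_p and φ(x) = p·(μ∗μ⁻)(x). Suppose Δ ∈ (0,1/2] satisfies ∑_{ξ,y} |μ̂(ξ)|²|μ̂(yξ)|² μ(y) > Δ ∑_ξ |μ̂(ξ)|², and μ(0) < Δ/4 and ∑_x μ(x)² < Δ/4. Then ∑_{x∈F_p} ∑_{y∈F_p^×} φ(x)φ(xy)μ(y) > (3/4)·Δ·p·φ(0). -/
/-!
Expanding `|μ̂|²` and using orthogonality of characters gives `φ(x) = ∑_ξ |μ̂(ξ)|² e(xξ)`,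
hence `∑_x φ(x) φ(xy) = p ∑_ξ |μ̂(ξ)|² |μ̂(yξ)|²`, `∑_ξ |μ̂(ξ)|² = φ(0)` and `∑_x φ(x) = p`.
So the double sum over all `y` equals `p` times the left side of the hypothesis and exceeds
`Δ p φ(0)`, while the removed term `y = 0` equals `p μ(0) φ(0) ≤ (Δ/4) p φ(0)`.
-/

open Finset Complex
open scoped Classical BigOperators Pointwise

/-- The additive character `x ↦ e^{2πix/p}` on `ZMod p`. -/
noncomputable def ePsi (p : ℕ) (x : ZMod p) : ℂ :=
  Complex.exp (2 * Real.pi * Complex.I * (x.val : ℂ) / (p : ℂ))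

/-- Fourier transform of a (real) measure on `ZMod p`. -/
noncomputable def ft (p : ℕ) [NeZero p] (μ : ZMod p → ℝ) (ξ : ZMod p) : ℂ :=
  ∑ x : ZMod p, (μ x : ℂ) * ePsi p (x * ξ)

/-- Convolution of two functions on `ZMod p`. -/
noncomputable def cnv (p : ℕ) [NeZero p] (f g : ZMod p → ℝ) (x : ZMod p) : ℝ :=
  ∑ y : ZMod p, f y * g (x - y)

/-- `φ(x) = p · (μ ∗ μ⁻)(x)`. -/
noncomputable def phiF (p : ℕ) [NeZero p] (μ : ZMod p → ℝ) (x : ZMod p) : ℝ :=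
  (p : ℝ) * cnv p μ (fun y => μ (-y)) x

/-- `k`-fold convolution of `f` (0-fold is the Dirac mass at 0). -/
noncomputable def convIter (p : ℕ) [NeZero p] (f : ZMod p → ℝ) : ℕ → ZMod p → ℝ
  | 0 => fun x => if x = 0 then 1 else 0
  | n + 1 => cnv p f (convIter p f n)

/-- `ν_k`, the `k`-fold convolution of `ν = μ ∗ μ⁻`. -/
noncomputable def nuk (p : ℕ) [NeZero p] (μ : ZMod p → ℝ) (k : ℕ) : ZMod p → ℝ :=
  convIter p (cnv p μ (fun y => μ (-y))) k

/-- `Λ_δ`, the set of large Fourier coefficients. -/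
noncomputable def Lam (p : ℕ) [NeZero p] (μ : ZMod p → ℝ) (δ : ℝ) : Finset (ZMod p) :=
  Finset.univ.filter (fun ξ => (p : ℝ) ^ (-δ) < ‖ft p μ ξ‖)

section Fourier

variable {p : ℕ} [NeZero p] (μ : ZMod p → ℝ)

local notation "ψ" => (ZMod.stdAddChar : AddChar (ZMod p) ℂ)

lemma ePsi_eq_stdAddChar (x : ZMod p) : ePsi p x = ψ x := by
  rw [ZMod.stdAddChar_apply, ZMod.toCircle_apply, ePsi]

lemma ft_eq_sum_stdAddChar (ξ : ZMod p) : ft p μ ξ = ∑ x, (μ x : ℂ) * ψ (x * ξ) := by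
  simp only [ft, ePsi_eq_stdAddChar]

lemma sum_mul_sum_stdAddChar_mul_add (g : ZMod p → ℂ) (t : ZMod p) :
    ∑ ξ, g ξ * ∑ x, ψ (x * (ξ + t)) = p * g (-t) := by
  simp only [AddChar.sum_mulShift _ (ZMod.isPrimitive_stdAddChar p), ZMod.card,
    add_eq_zero_iff_eq_neg, Nat.cast_ite, Nat.cast_zero, mul_ite, mul_zero, sum_ite_eq',
    mem_univ, if_true, mul_comm]

lemma norm_ft_neg (ξ : ZMod p) : ‖ft p μ (-ξ)‖ = ‖ft p μ ξ‖ := by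
  have : ft p μ (-ξ) = starRingEnd ℂ (ft p μ ξ) := by
    simp only [ft_eq_sum_stdAddChar, map_sum, map_mul, conj_ofReal, mul_neg,
      AddChar.map_neg_eq_conj]
  rw [this, norm_conj]

lemma sq_norm_ft_eq_sum (ξ : ZMod p) :
    (‖ft p μ ξ‖ : ℂ) ^ 2 = ∑ a, ∑ b, (μ a : ℂ) * μ b * ψ (-(a * ξ) + b * ξ) := by
  rw [← conj_mul', ft_eq_sum_stdAddChar, map_sum, sum_mul_sum]
  simp only [map_mul, conj_ofReal, ← AddChar.map_neg_eq_conj, AddChar.map_add_eq_mul]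
  exact sum_congr rfl fun a _ => sum_congr rfl fun b _ => by ring

lemma phiF_eq_sum_sq_norm_ft (x : ZMod p) :
    (phiF p μ x : ℂ) = ∑ ξ, (‖ft p μ ξ‖ : ℂ) ^ 2 * ψ (x * ξ) := by
  calc (phiF p μ x : ℂ) = ∑ a, (μ a : ℂ) * (p * μ (-(x - a))) := by
        simp only [phiF, cnv, ofReal_mul, ofReal_natCast, ofReal_sum, mul_sum]
        exact sum_congr rfl fun a _ => by ring
    _ = ∑ a, (μ a : ℂ) * ∑ b, (μ b : ℂ) * ∑ ξ, ψ (ξ * (b + (x - a))) := by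
        simp only [sum_mul_sum_stdAddChar_mul_add]
    _ = ∑ ξ, (‖ft p μ ξ‖ : ℂ) ^ 2 * ψ (x * ξ) := by
        simp only [sq_norm_ft_eq_sum, mul_sum, sum_mul]
        conv_rhs => rw [sum_comm]
        refine sum_congr rfl fun a _ => ?_
        conv_rhs => rw [sum_comm]
        refine sum_congr rfl fun b _ => sum_congr rfl fun ξ _ => ?_
        rw [mul_assoc _ _ (ψ (x * ξ)), ← AddChar.map_add_eq_mul, ← mul_assoc]
        ring_nf

lemma sum_phiF_mul_phiF_mul (y : ZMod p) :
    ∑ x, phiF p μ x * phiF p μ (x * y) = p * ∑ ξ, ‖ft p μ ξ‖ ^ 2 * ‖ft p μ (y * ξ)‖ ^ 2 := by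
  apply ofReal_injective
  push_cast
  calc ∑ x, (phiF p μ x : ℂ) * phiF p μ (x * y)
      = ∑ η, (‖ft p μ η‖ : ℂ) ^ 2 *
          ∑ ξ, (‖ft p μ ξ‖ : ℂ) ^ 2 * ∑ x, ψ (x * (ξ + y * η)) := by
        simp only [phiF_eq_sum_sq_norm_ft, sum_mul_sum]
        simp only [mul_sum]
        rw [sum_comm_cycle, sum_comm_cycle, sum_comm]
        refine sum_congr rfl fun η _ => sum_congr rfl fun ξ _ =>
          sum_congr rfl fun x _ => ?_
        rw [mul_add, AddChar.map_add_eq_mul, ← mul_assoc x y]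
        ring
    _ = p * ∑ ξ, (‖ft p μ ξ‖ : ℂ) ^ 2 * (‖ft p μ (y * ξ)‖ : ℂ) ^ 2 := by
        simp only [sum_mul_sum_stdAddChar_mul_add, norm_ft_neg]
        rw [mul_sum]
        exact sum_congr rfl fun ξ _ => by ring

lemma sum_sq_norm_ft : ∑ ξ, ‖ft p μ ξ‖ ^ 2 = phiF p μ 0 := by
  apply ofReal_injective
  simp [phiF_eq_sum_sq_norm_ft]

lemma sum_phiF : ∑ x, phiF p μ x = p * (∑ x, μ x) ^ 2 := by
  simp only [phiF, cnv, ← mul_sum, sq, sum_mul_sum, neg_sub]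
  rw [sum_comm]
  refine congrArg _ (sum_congr rfl fun y _ => ?_)
  rw [← mul_sum]
  exact congrArg _ ((Equiv.subLeft y).sum_comp μ)

lemma phiF_zero_nonneg : 0 ≤ phiF p μ 0 := by
  simp only [phiF, cnv, zero_sub, neg_neg]
  exact mul_nonneg (Nat.cast_nonneg p) (sum_nonneg fun y _ => mul_self_nonneg (μ y))

end Fourier

theorem stmt2_general (p : ℕ) [Fact p.Prime] (μ : ZMod p → ℝ)
    (hsum : ∑ x : ZMod p, μ x = 1)
    (Δ : ℝ)
    (h25 : ∑ ξ : ZMod p, ∑ y : ZMod p,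
        ‖ft p μ ξ‖ ^ 2 * ‖ft p μ (y * ξ)‖ ^ 2 * μ y
      > Δ * ∑ ξ : ZMod p, ‖ft p μ ξ‖ ^ 2)
    (h26a : μ 0 < Δ / 4) :
    ∑ x : ZMod p, ∑ y ∈ Finset.univ.filter (fun y : ZMod p => y ≠ 0),
        phiF p μ x * phiF p μ (x * y) * μ y
      > 3 / 4 * Δ * p * phiF p μ 0 := by
  have hp : (0 : ℝ) < p := Nat.cast_pos.mpr (NeZero.pos p)
  have hall : ∑ x, ∑ y, phiF p μ x * phiF p μ (x * y) * μ y
      = p * ∑ ξ, ∑ y, ‖ft p μ ξ‖ ^ 2 * ‖ft p μ (y * ξ)‖ ^ 2 * μ y := by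
    rw [sum_comm]
    simp only [← sum_mul, sum_phiF_mul_phiF_mul]
    simp only [sum_mul, mul_sum, mul_assoc]
    exact sum_comm
  have hzero : ∑ x, phiF p μ x * phiF p μ (x * 0) * μ 0 = p * (phiF p μ 0 * μ 0) := by
    simp only [mul_zero, ← sum_mul, sum_phiF, hsum, one_pow, mul_one, mul_assoc]
  simp_rw [filter_ne', sum_erase_eq_sub (mem_univ _)]
  rw [sum_sub_distrib, hall, hzero]
  rw [sum_sq_norm_ft] at h25
  have hmain := mul_lt_mul_of_pos_left h25 hp
  have hdiag := mul_le_mul_of_nonneg_left h26a.le (mul_nonneg hp.le (phiF_zero_nonneg μ))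
  linarith

theorem stmt2 (p : ℕ) [Fact p.Prime] (μ : ZMod p → ℝ)
    (hpos : ∀ x, 0 ≤ μ x) (hsum : ∑ x : ZMod p, μ x = 1)
    (Δ : ℝ) (hΔ0 : 0 < Δ) (hΔ1 : Δ ≤ 1 / 2)
    (h25 : ∑ ξ : ZMod p, ∑ y : ZMod p,
        ‖ft p μ ξ‖ ^ 2 * ‖ft p μ (y * ξ)‖ ^ 2 * μ y
      > Δ * ∑ ξ : ZMod p, ‖ft p μ ξ‖ ^ 2)
    (h26a : μ 0 < Δ / 4) (h26b : ∑ x : ZMod p, (μ x) ^ 2 < Δ / 4) :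
    ∑ x : ZMod p, ∑ y ∈ Finset.univ.filter (fun y : ZMod p => y ≠ 0),
        phiF p μ x * phiF p μ (x * y) * μ y
      > 3 / 4 * Δ * p * phiF p μ 0 :=
  stmt2_general p μ hsum Δ h25 h26a
end

section
/- Let H ≤ F_p^× be a multiplicative subgroup, μ = μ_H the uniform measure on H, ν_k the k-fold convolution of μ∗μ⁻. Then for all ξ ∈ F_p, ν̂_k(ξ)^{4k} ≤ ∑_{x∈F_p} ν̂_k(xξ)² ν_k(x). -/
open Finset Complex
open scoped Classical BigOperators Pointwise

/-! Since `ν̂_k = |μ̂|^{2k}` and `μ` is `H`-invariant, `ν̂_k` is real, nonnegative and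
`H`-invariant, so averaging over `H` and exchanging the sums gives
`ν̂_k(ξ) = ∑_h μ(h) ν̂_k(hξ) = ∑_x ν_k(x) μ̂(xξ) ≤ ∑_x ν_k(x) |μ̂(xξ)|`.
Raising this to the power `4k` and applying Jensen's inequality for the probability measure `ν_k`
gives the bound, because `|μ̂|^{4k} = |ν̂_k|²`. -/

open ComplexConjugate

variable {p : ℕ} [NeZero p]

lemma ePsi_eq_stdAddChar_s14 : ePsi p = ZMod.stdAddChar := by
  funext x
  rw [ZMod.stdAddChar_apply, ZMod.toCircle_apply, ePsi]

lemma ePsi_zero : ePsi p 0 = 1 := by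
  rw [ePsi_eq_stdAddChar_s14, AddChar.map_zero_eq_one]

lemma ePsi_add (a b : ZMod p) : ePsi p (a + b) = ePsi p a * ePsi p b := by
  rw [ePsi_eq_stdAddChar_s14, AddChar.map_add_eq_mul]

lemma ePsi_neg (x : ZMod p) : ePsi p (-x) = conj (ePsi p x) := by
  rw [ePsi_eq_stdAddChar_s14, AddChar.map_neg_eq_conj]

lemma ft_cnv (f g : ZMod p → ℝ) (ξ : ZMod p) :
    ft p (cnv p f g) ξ = ft p f ξ * ft p g ξ := by
  rw [ft, ft, ft, Finset.sum_mul_sum]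
  simp only [cnv, Complex.ofReal_sum, Complex.ofReal_mul, Finset.sum_mul]
  rw [Finset.sum_comm]
  refine Fintype.sum_congr _ _ fun y => ?_
  refine Fintype.sum_equiv (Equiv.subRight y) _ _ fun x => ?_
  rw [Equiv.subRight_apply, show x * ξ = y * ξ + (x - y) * ξ by ring, ePsi_add]
  ring

lemma ft_comp_neg (f : ZMod p → ℝ) (ξ : ZMod p) :
    ft p (fun y => f (-y)) ξ = conj (ft p f ξ) := by
  simp only [ft, map_sum, map_mul, Complex.conj_ofReal, ← ePsi_neg]
  exact Fintype.sum_equiv (Equiv.neg (ZMod p)) _ _ fun x => by simp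

lemma ft_convIter (f : ZMod p → ℝ) (n : ℕ) (ξ : ZMod p) :
    ft p (convIter p f n) ξ = ft p f ξ ^ n := by
  induction n with
  | zero => simp [convIter, ft, apply_ite, ePsi_zero]
  | succ n ih => rw [convIter, ft_cnv, ih, pow_succ']

lemma ft_nuk (μ : ZMod p → ℝ) (k : ℕ) (ξ : ZMod p) :
    ft p (nuk p μ k) ξ = ((‖ft p μ ξ‖ ^ (2 * k) : ℝ) : ℂ) := by
  rw [nuk, ft_convIter, ft_cnv, ft_comp_neg, Complex.mul_conj', pow_mul]
  push_cast
  rfl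

lemma norm_ft_nuk (μ : ZMod p → ℝ) (k : ℕ) (ξ : ZMod p) :
    ‖ft p (nuk p μ k) ξ‖ = ‖ft p μ ξ‖ ^ (2 * k) := by
  rw [ft_nuk, Complex.norm_of_nonneg (by positivity)]

lemma ft_mul_left_of_invariant {μ : ZMod p → ℝ} {u : (ZMod p)ˣ}
    (hμ : ∀ x, μ (u * x) = μ x) (ξ : ZMod p) : ft p μ (u * ξ) = ft p μ ξ :=
  Fintype.sum_equiv u.mulLeft _ _ fun x => by
    rw [Units.mulLeft_apply, hμ, mul_left_comm, mul_assoc]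

lemma sum_cnv (f g : ZMod p → ℝ) :
    ∑ x, cnv p f g x = (∑ x, f x) * ∑ x, g x := by
  simp only [cnv, Finset.sum_mul_sum]
  rw [Finset.sum_comm]
  exact Fintype.sum_congr _ _ fun y =>
    Fintype.sum_equiv (Equiv.subRight y) _ _ fun x => by simp

lemma cnv_nonneg {f g : ZMod p → ℝ} (hf : 0 ≤ f) (hg : 0 ≤ g) : 0 ≤ cnv p f g :=
  fun _ => Finset.sum_nonneg fun y _ => mul_nonneg (hf y) (hg _)

lemma sum_convIter {f : ZMod p → ℝ} (hf : ∑ x, f x = 1) (n : ℕ) :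
    ∑ x, convIter p f n x = 1 := by
  induction n with
  | zero => simp [convIter]
  | succ n ih => rw [convIter, sum_cnv, hf, ih, one_mul]

lemma convIter_nonneg {f : ZMod p → ℝ} (hf : 0 ≤ f) (n : ℕ) : 0 ≤ convIter p f n := by
  induction n with
  | zero => intro x; simp only [convIter]; positivity
  | succ n ih => exact cnv_nonneg hf ih

lemma sum_nuk {μ : ZMod p → ℝ} (hμ : ∑ x, μ x = 1) (k : ℕ) : ∑ x, nuk p μ k x = 1 := by
  refine sum_convIter ?_ k
  rw [sum_cnv, hμ, one_mul, ← hμ]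
  exact Fintype.sum_equiv (Equiv.neg (ZMod p)) _ _ fun x => by simp

lemma nuk_nonneg {μ : ZMod p → ℝ} (hμ : 0 ≤ μ) (k : ℕ) : 0 ≤ nuk p μ k :=
  convIter_nonneg (cnv_nonneg hμ fun y => hμ (-y)) k

lemma sum_mul_ft_mul_comm (μ ν : ZMod p → ℝ) (ξ : ZMod p) :
    ∑ x, (ν x : ℂ) * ft p μ (x * ξ) = ∑ h, (μ h : ℂ) * ft p ν (h * ξ) := by
  simp only [ft, Finset.mul_sum]
  rw [Finset.sum_comm]
  refine Fintype.sum_congr _ _ fun h => Fintype.sum_congr _ _ fun x => ?_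
  rw [mul_left_comm h, mul_left_comm]

lemma ft_eq_sum_mul_ft_mul {μ : ZMod p → ℝ} (hμ : ∑ x, μ x = 1) (ν : ZMod p → ℝ) (ξ : ZMod p)
    (hν : ∀ h, μ h ≠ 0 → ft p ν (h * ξ) = ft p ν ξ) :
    ft p ν ξ = ∑ x, (ν x : ℂ) * ft p μ (x * ξ) := by
  have hμν : ∀ h, (μ h : ℂ) * ft p ν (h * ξ) = μ h * ft p ν ξ := fun h => by
    by_cases h0 : μ h = 0
    · simp [h0]
    · rw [hν h h0]
  rw [sum_mul_ft_mul_comm, Fintype.sum_congr _ _ hμν, ← Finset.sum_mul, ← Complex.ofReal_sum,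
    hμ, Complex.ofReal_one, one_mul]

lemma norm_ft_le_sum_mul_norm_ft_mul {μ ν : ZMod p → ℝ} (hμ : ∑ x, μ x = 1) (hν₀ : 0 ≤ ν)
    (ξ : ZMod p) (hν : ∀ h, μ h ≠ 0 → ft p ν (h * ξ) = ft p ν ξ) :
    ‖ft p ν ξ‖ ≤ ∑ x, ν x * ‖ft p μ (x * ξ)‖ := by
  rw [ft_eq_sum_mul_ft_mul hμ ν ξ hν]
  refine (norm_sum_le _ _).trans_eq (Fintype.sum_congr _ _ fun x => ?_)
  rw [norm_mul, Complex.norm_of_nonneg (hν₀ x)]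

theorem norm_ft_nuk_pow_le_sum {μ : ZMod p → ℝ} (hμ₀ : 0 ≤ μ) (hμ₁ : ∑ x, μ x = 1)
    (hμ : ∀ h, μ h ≠ 0 → ∀ ξ, ‖ft p μ (h * ξ)‖ = ‖ft p μ ξ‖) (k : ℕ) (ξ : ZMod p) :
    ‖ft p (nuk p μ k) ξ‖ ^ (4 * k)
      ≤ ∑ x, ‖ft p (nuk p μ k) (x * ξ)‖ ^ 2 * nuk p μ k x := by
  have hν₀ : 0 ≤ nuk p μ k := nuk_nonneg hμ₀ k
  have hbound : ‖ft p μ ξ‖ ^ (2 * k) ≤ ∑ x, nuk p μ k x * ‖ft p μ (x * ξ)‖ := by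
    rw [← norm_ft_nuk]
    exact norm_ft_le_sum_mul_norm_ft_mul hμ₁ hν₀ ξ fun h hh => by rw [ft_nuk, ft_nuk, hμ h hh]
  calc ‖ft p (nuk p μ k) ξ‖ ^ (4 * k) = (‖ft p μ ξ‖ ^ (2 * k)) ^ (4 * k) := by rw [norm_ft_nuk]
    _ ≤ (∑ x, nuk p μ k x * ‖ft p μ (x * ξ)‖) ^ (4 * k) := by gcongr
    _ ≤ ∑ x, nuk p μ k x * ‖ft p μ (x * ξ)‖ ^ (4 * k) :=
      Real.pow_arith_mean_le_arith_mean_pow _ _ _ (fun x _ => hν₀ x) (sum_nuk hμ₁ k)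
        (fun x _ => norm_nonneg _) _
    _ = ∑ x, ‖ft p (nuk p μ k) (x * ξ)‖ ^ 2 * nuk p μ k x := by
      refine Fintype.sum_congr _ _ fun x => ?_
      rw [norm_ft_nuk, ← pow_mul]
      ring

noncomputable def uniformOnSubgroup (H : Subgroup (ZMod p)ˣ) (x : ZMod p) : ℝ :=
  if ∃ u ∈ H, ((u : (ZMod p)ˣ) : ZMod p) = x then 1 / (Nat.card H : ℝ) else 0

section uniformOnSubgroup

variable (H : Subgroup (ZMod p)ˣ)

lemma uniformOnSubgroup_nonneg : 0 ≤ uniformOnSubgroup H := fun x => by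
  unfold uniformOnSubgroup
  positivity

lemma sum_uniformOnSubgroup : ∑ x, uniformOnSubgroup H x = 1 := by
  have hcard : #{x : ZMod p | ∃ u ∈ H, (u : ZMod p) = x} = Nat.card H := by
    rw [Nat.card_eq_fintype_card, ← Finset.card_univ,
      ← Finset.card_image_of_injective _ (fun a b h => Subtype.ext (Units.ext h))]
    congr 1
    ext x
    simp [eq_comm]
  simp only [uniformOnSubgroup]
  rw [← Finset.sum_filter, Finset.sum_const, hcard, nsmul_eq_mul]
  field_simp

lemma uniformOnSubgroup_mul_left {u : (ZMod p)ˣ} (hu : u ∈ H) (x : ZMod p) :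
    uniformOnSubgroup H (u * x) = uniformOnSubgroup H x := by
  have hiff : (∃ v ∈ H, (v : ZMod p) = u * x) ↔ ∃ v ∈ H, (v : ZMod p) = x :=
    ⟨fun ⟨v, hv, he⟩ => ⟨u⁻¹ * v, H.mul_mem (H.inv_mem hu) hv, by simp [he]⟩,
      fun ⟨v, hv, he⟩ => ⟨u * v, H.mul_mem hu hv, by rw [Units.val_mul, he]⟩⟩
  exact if_congr hiff rfl rfl

lemma ft_uniformOnSubgroup_mul_of_ne_zero {h : ZMod p} (hh : uniformOnSubgroup H h ≠ 0)
    (ξ : ZMod p) : ft p (uniformOnSubgroup H) (h * ξ) = ft p (uniformOnSubgroup H) ξ := by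
  obtain ⟨u, hu, rfl⟩ : ∃ u ∈ H, (u : ZMod p) = h := by
    by_contra hnot
    exact hh (if_neg hnot)
  exact ft_mul_left_of_invariant (uniformOnSubgroup_mul_left H hu) ξ

end uniformOnSubgroup

theorem stmt14_general (p : ℕ) [Fact p.Prime] (H : Subgroup (ZMod p)ˣ)
    (μ : ZMod p → ℝ)
    (hμ : ∀ x, μ x = if ∃ u ∈ H, ((u : (ZMod p)ˣ) : ZMod p) = x
        then 1 / (Nat.card H : ℝ) else 0)
    (k : ℕ) :
    ∀ ξ : ZMod p,
      ‖ft p (nuk p μ k) ξ‖ ^ (4 * k)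
        ≤ ∑ x : ZMod p, ‖ft p (nuk p μ k) (x * ξ)‖ ^ 2 * nuk p μ k x := by
  obtain rfl : μ = uniformOnSubgroup H := funext hμ
  exact norm_ft_nuk_pow_le_sum (uniformOnSubgroup_nonneg H) (sum_uniformOnSubgroup H)
    (fun h hh ξ => by rw [ft_uniformOnSubgroup_mul_of_ne_zero H hh]) k

theorem stmt14 (p : ℕ) [Fact p.Prime] (H : Subgroup (ZMod p)ˣ)
    (μ : ZMod p → ℝ)
    (hμ : ∀ x, μ x = if ∃ u ∈ H, ((u : (ZMod p)ˣ) : ZMod p) = x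
        then 1 / (Nat.card H : ℝ) else 0)
    (k : ℕ) (hk : 1 ≤ k) :
    ∀ ξ : ZMod p,
      ‖ft p (nuk p μ k) ξ‖ ^ (4 * k)
        ≤ ∑ x : ZMod p, ‖ft p (nuk p μ k) (x * ξ)‖ ^ 2 * nuk p μ k x :=
  stmt14_general p H μ hμ k
end
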